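/- The commutator of Δ = ∑_k D_k² with multiplication by x_j equals 2D_j: [Δ, x_j] = 2D_j. -/

import Mathlib

open Finset

/-- Partial derivative `∂_{x_j}`. -/
noncomputable def pd {N : ℕ} (j : Fin N) (f : (Fin N → ℝ) → ℝ) : (Fin N → ℝ) → ℝ :=
  fun t' => deriv (fun t => f (Function.update t' j t)) (t' j)

/-- The rational Dunkl operator. -/
noncomputable def Dunkl {N : ℕ} (β : ℝ) (j : Fin N) (f : (Fin N → ℝ) → ℝ) :
    (Fin N → ℝ) → ℝ :=
  fun x => pd j f x +
    β * ∑ k ∈ univ.erase j, (f x - f (x ∘ ⇑(Equiv.swap j k))) / (x j - x k)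

/-- `Δ = ∑_k D_k²`. -/
noncomputable def DeltaOp {N : ℕ} (β : ℝ) (f : (Fin N → ℝ) → ℝ) : (Fin N → ℝ) → ℝ :=
  fun x => ∑ k, Dunkl β k (Dunkl β k f) x

/-! ### Auxiliary lemmas -/

lemma hasDerivAt_update' {N : ℕ} (x : Fin N → ℝ) (k : Fin N) (t : ℝ) :
    HasDerivAt (fun s => Function.update x k s) (Pi.single k 1 : Fin N → ℝ) t := by
  have h : (fun s : ℝ => Function.update x k s)
      = fun s => x + (s - x k) • (Pi.single k 1 : Fin N → ℝ) := by
    funext s; funext i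
    rcases eq_or_ne i k with h | h
    · subst h; simp
    · simp [Function.update_of_ne h, Pi.single_eq_of_ne h]
  rw [h]
  have h2 : HasDerivAt (fun s : ℝ => (s - x k) • (Pi.single k 1 : Fin N → ℝ))
      ((1:ℝ) • (Pi.single k 1 : Fin N → ℝ)) t :=
    ((hasDerivAt_id t).sub_const (x k)).smul_const _
  simpa using h2.const_add x

lemma diff_along {N : ℕ} {F : (Fin N → ℝ) → ℝ} {x : Fin N → ℝ} {k : Fin N}
    (hF : DifferentiableAt ℝ F x) :
    HasDerivAt (fun t => F (Function.update x k t))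
      (fderiv ℝ F x (Pi.single k 1 : Fin N → ℝ)) (x k) := by
  have h1 := hasDerivAt_update' x k (x k)
  have h3 : HasFDerivAt F (fderiv ℝ F x) (Function.update x k (x k)) := by
    rw [Function.update_eq_self]; exact hF.hasFDerivAt
  exact h3.comp_hasDerivAt (x k) h1

lemma pd_eq_fderiv {N : ℕ} (k : Fin N) {f : (Fin N → ℝ) → ℝ} {x : Fin N → ℝ}
    (hf : DifferentiableAt ℝ f x) :
    pd k f x = fderiv ℝ f x (Pi.single k 1 : Fin N → ℝ) :=
  (diff_along hf).deriv

lemma isOpen_inj {N : ℕ} : IsOpen {x : Fin N → ℝ | Function.Injective x} := by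
  have h : {x : Fin N → ℝ | Function.Injective x}
      = ⋂ k, ⋂ l, {x : Fin N → ℝ | k ≠ l → x k ≠ x l} := by
    ext x
    simp only [Set.mem_setOf_eq, Set.mem_iInter]
    constructor
    · intro hx k l hkl; exact fun h => hkl (hx h)
    · intro h a b hab; by_contra hne; exact h a b hne hab
  rw [h]
  refine isOpen_iInter_of_finite fun k => isOpen_iInter_of_finite fun l => ?_
  rcases eq_or_ne k l with h | h
  · subst h; simp
  · have : {x : Fin N → ℝ | k ≠ l → x k ≠ x l} = {x : Fin N → ℝ | x k ≠ x l} := by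
      ext x; simp [h]
    rw [this]
    exact isOpen_ne_fun (continuous_apply k) (continuous_apply l)

lemma Dunkl_congr {N : ℕ} (β : ℝ) (k : Fin N) {F G : (Fin N → ℝ) → ℝ}
    {U : Set (Fin N → ℝ)} (hU : IsOpen U) (hFG : ∀ y ∈ U, F y = G y)
    {x : Fin N → ℝ} (hx : x ∈ U) (hsw : ∀ l, (x ∘ ⇑(Equiv.swap k l)) ∈ U) :
    Dunkl β k F x = Dunkl β k G x := by
  unfold Dunkl
  congr 1
  · unfold pd
    apply Filter.EventuallyEq.deriv_eq
    have hc : ContinuousAt (fun t => Function.update x k t) (x k) :=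
      (hasDerivAt_update' x k (x k)).continuousAt
    have hm : U ∈ nhds (Function.update x k (x k)) := by
      rw [Function.update_eq_self]; exact hU.mem_nhds hx
    filter_upwards [hc.preimage_mem_nhds hm] with t ht using hFG _ ht
  · congr 1
    refine Finset.sum_congr rfl fun l hl => ?_
    rw [hFG _ hx, hFG _ (hsw l)]

lemma Dunkl_add {N : ℕ} (β : ℝ) (k : Fin N) {F G : (Fin N → ℝ) → ℝ}
    {x : Fin N → ℝ} (hF : DifferentiableAt ℝ F x) (hG : DifferentiableAt ℝ G x) :
    Dunkl β k (fun y => F y + G y) x = Dunkl β k F x + Dunkl β k G x := by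
  unfold Dunkl
  have hpd : pd k (fun y => F y + G y) x = pd k F x + pd k G x := by
    unfold pd
    show deriv (fun t => F (Function.update x k t) + G (Function.update x k t)) (x k) = _
    rw [((diff_along hF).fun_add (diff_along hG)).deriv, (diff_along hF).deriv,
      (diff_along hG).deriv]
  rw [hpd]
  have hsum : ∀ l ∈ univ.erase k,
      ((F x + G x) - (F (x ∘ ⇑(Equiv.swap k l)) + G (x ∘ ⇑(Equiv.swap k l)))) / (x k - x l)
      = (F x - F (x ∘ ⇑(Equiv.swap k l))) / (x k - x l)
        + (G x - G (x ∘ ⇑(Equiv.swap k l))) / (x k - x l) := by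
    intro l _; rw [← add_div]; congr 1; ring
  rw [Finset.sum_congr rfl hsum, Finset.sum_add_distrib]
  ring

lemma Dunkl_const_mul {N : ℕ} (β : ℝ) (k : Fin N) (c : ℝ) (F : (Fin N → ℝ) → ℝ)
    (x : Fin N → ℝ) :
    Dunkl β k (fun y => c * F y) x = c * Dunkl β k F x := by
  unfold Dunkl
  have hpd : pd k (fun y => c * F y) x = c * pd k F x := by
    unfold pd; exact deriv_const_mul_field c
  rw [hpd]
  have hsum : ∀ l ∈ univ.erase k,
      (c * F x - c * F (x ∘ ⇑(Equiv.swap k l))) / (x k - x l)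
      = c * ((F x - F (x ∘ ⇑(Equiv.swap k l))) / (x k - x l)) := by
    intro l _; rw [← mul_sub, mul_div_assoc]
  rw [Finset.sum_congr rfl hsum, ← Finset.mul_sum]
  ring

lemma Dunkl_sum {N : ℕ} (β : ℝ) (k : Fin N) {ι : Type*} (s : Finset ι)
    (F : ι → (Fin N → ℝ) → ℝ) {x : Fin N → ℝ}
    (h : ∀ i ∈ s, DifferentiableAt ℝ (F i) x) :
    Dunkl β k (fun y => ∑ i ∈ s, F i y) x = ∑ i ∈ s, Dunkl β k (F i) x := by
  classical
  induction s using Finset.induction_on with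
  | empty =>
    simp only [Finset.sum_empty]
    unfold Dunkl pd
    simp
  | @insert a s ha ih =>
    rw [Finset.sum_insert ha]
    have h1 : DifferentiableAt ℝ (F a) x := h a (Finset.mem_insert_self a s)
    have h2 : DifferentiableAt ℝ (fun y => ∑ i ∈ s, F i y) x := by
      apply DifferentiableAt.fun_sum
      intro i hi; exact h i (Finset.mem_insert_of_mem hi)
    have := Dunkl_add β k h1 h2
    simp only [Finset.sum_insert ha]
    rw [this, ih (fun i hi => h i (Finset.mem_insert_of_mem hi))]

/-- composing with a permutation of coordinates, as a CLM -/
noncomputable def permCLM {N : ℕ} (σ : Equiv.Perm (Fin N)) :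
    (Fin N → ℝ) →L[ℝ] (Fin N → ℝ) :=
  ContinuousLinearMap.pi (fun i => ContinuousLinearMap.proj (σ i))

lemma contDiff_comp_perm {N : ℕ} {f : (Fin N → ℝ) → ℝ} (hf : ContDiff ℝ (⊤ : ℕ∞) f)
    (σ : Equiv.Perm (Fin N)) : ContDiff ℝ (⊤ : ℕ∞) (fun y => f (y ∘ ⇑σ)) := by
  have : (fun y : Fin N → ℝ => f (y ∘ ⇑σ)) = f ∘ (permCLM σ) := rfl
  rw [this]
  exact hf.comp (permCLM σ).contDiff

lemma contDiff_pd {N : ℕ} {f : (Fin N → ℝ) → ℝ} (hf : ContDiff ℝ (⊤ : ℕ∞) f) (k : Fin N) :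
    Differentiable ℝ (pd k f) := by
  have h1 : pd k f = fun y => (ContinuousLinearMap.apply ℝ ℝ (Pi.single k 1 : Fin N → ℝ))
      (fderiv ℝ f y) := by
    funext y
    exact pd_eq_fderiv k ((hf.differentiable (by simp)) y)
  rw [h1]
  have h2 : ContDiff ℝ (⊤ : ℕ∞) (fderiv ℝ f) := hf.fderiv_right (by simp)
  exact ((ContinuousLinearMap.apply ℝ ℝ (Pi.single k 1 : Fin N → ℝ)).contDiff.comp
    h2).differentiable (by simp)

lemma dunkl_differentiableAt {N : ℕ} (β : ℝ) (k : Fin N) {f : (Fin N → ℝ) → ℝ}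
    (hf : ContDiff ℝ (⊤ : ℕ∞) f) {x : Fin N → ℝ} (hx : Function.Injective x) :
    DifferentiableAt ℝ (Dunkl β k f) x := by
  unfold Dunkl
  apply DifferentiableAt.add
  · exact (contDiff_pd hf k) x
  · apply DifferentiableAt.const_mul
    apply DifferentiableAt.fun_sum
    intro l hl
    have hkl : k ≠ l := (Finset.mem_erase.mp hl).1.symm
    have h1 : DifferentiableAt ℝ (fun y : Fin N → ℝ => f y - f (y ∘ ⇑(Equiv.swap k l))) x :=
      (((hf.differentiable (by simp)) x).sub
        (((contDiff_comp_perm hf (Equiv.swap k l)).differentiable (by simp)) x))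
    have h2 : DifferentiableAt ℝ (fun y : Fin N → ℝ => y k - y l) x :=
      ((differentiable_apply k) x).sub ((differentiable_apply l) x)
    have h3 : x k - x l ≠ 0 := sub_ne_zero_of_ne (fun h => hkl (hx h))
    have h4 : (fun y : Fin N → ℝ => (f y - f (y ∘ ⇑(Equiv.swap k l))) / (y k - y l))
        = fun y => (f y - f (y ∘ ⇑(Equiv.swap k l))) * (y k - y l)⁻¹ := by
      funext y; rw [div_eq_mul_inv]
    rw [h4]
    exact h1.mul (h2.inv h3)

/-- The first-order correction in the Dunkl product rule. -/
noncomputable def Ecorr {N : ℕ} (β : ℝ) (j k : Fin N) (f : (Fin N → ℝ) → ℝ) :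
    (Fin N → ℝ) → ℝ :=
  fun x => if k = j then f x + β * ∑ l ∈ univ.erase j, f (x ∘ ⇑(Equiv.swap j l))
           else -(β * f (x ∘ ⇑(Equiv.swap k j)))

lemma pd_coord_mul {N : ℕ} (j k : Fin N) {F : (Fin N → ℝ) → ℝ} {x : Fin N → ℝ}
    (hF : DifferentiableAt ℝ F x) :
    pd k (fun y => y j * F y) x = (if k = j then F x else 0) + x j * pd k F x := by
  rcases eq_or_ne k j with h | h
  · subst h
    simp only [eq_self_iff_true, if_true]
    unfold pd
    have h1 : (fun t => (fun y => y k * F y) (Function.update x k t))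
        = fun t => t * F (Function.update x k t) := by
      funext t; simp
    rw [h1]
    have h2 : HasDerivAt (fun t => t * F (Function.update x k t))
        (1 * F (Function.update x k (x k)) + (x k) * fderiv ℝ F x (Pi.single k 1 : Fin N → ℝ))
        (x k) := (hasDerivAt_id (x k)).mul (diff_along hF)
    rw [h2.deriv, (diff_along hF).deriv, Function.update_eq_self]
    ring
  · simp only [if_neg h]
    unfold pd
    have h1 : (fun t => (fun y => y j * F y) (Function.update x k t))
        = fun t => x j * F (Function.update x k t) := by
      funext t; simp [Function.update_of_ne (Ne.symm h)]
    rw [h1, deriv_const_mul_field]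
    ring

lemma dunkl_mul {N : ℕ} (β : ℝ) (j k : Fin N) {F : (Fin N → ℝ) → ℝ} {x : Fin N → ℝ}
    (hF : DifferentiableAt ℝ F x) (hx : Function.Injective x) :
    Dunkl β k (fun y => y j * F y) x = x j * Dunkl β k F x + Ecorr β j k F x := by
  unfold Dunkl
  rw [pd_coord_mul j k hF]
  have hterm : ∀ l ∈ univ.erase k,
      ((fun y => y j * F y) x - (fun y => y j * F y) (x ∘ ⇑(Equiv.swap k l))) / (x k - x l)
      = x j * ((F x - F (x ∘ ⇑(Equiv.swap k l))) / (x k - x l))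
        + ((x j - (x ∘ ⇑(Equiv.swap k l)) j) * F (x ∘ ⇑(Equiv.swap k l))) / (x k - x l) := by
    intro l _
    simp only
    rw [mul_div_assoc' (x j), ← add_div]
    congr 1
    ring
  rw [Finset.sum_congr rfl hterm, Finset.sum_add_distrib, ← Finset.mul_sum]
  have hB : ∑ l ∈ univ.erase k,
      ((x j - (x ∘ ⇑(Equiv.swap k l)) j) * F (x ∘ ⇑(Equiv.swap k l))) / (x k - x l)
      = if k = j then ∑ l ∈ univ.erase j, F (x ∘ ⇑(Equiv.swap j l))
        else -F (x ∘ ⇑(Equiv.swap k j)) := by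
    rcases eq_or_ne k j with h | h
    · subst h
      rw [if_pos rfl]
      refine Finset.sum_congr rfl fun l hl => ?_
      have hlk : l ≠ k := (Finset.mem_erase.mp hl).1
      have hs : (x ∘ ⇑(Equiv.swap k l)) k = x l := by
        simp [Equiv.swap_apply_left]
      rw [hs]
      have hne : x k - x l ≠ 0 := sub_ne_zero_of_ne (fun hh => hlk.symm (hx hh))
      rw [mul_comm, mul_div_assoc, div_self hne, mul_one]
    · rw [if_neg h]
      rw [Finset.sum_eq_single j]
      · have hs : (x ∘ ⇑(Equiv.swap k j)) j = x k := by
          simp [Equiv.swap_apply_right]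
        rw [hs]
        have hne : x k - x j ≠ 0 := sub_ne_zero_of_ne (fun hh => h (hx hh))
        have : x j - x k = -(x k - x j) := by ring
        rw [this, neg_mul, neg_div, mul_comm, mul_div_assoc, div_self hne, mul_one]
      · intro l hl hlj
        have hlk : l ≠ k := (Finset.mem_erase.mp hl).1
        have hs : (x ∘ ⇑(Equiv.swap k l)) j = x j := by
          simp [Equiv.swap_apply_of_ne_of_ne (Ne.symm h) (Ne.symm hlj)]
        rw [hs, sub_self, zero_mul, zero_div]
      · intro hj
        exact absurd (Finset.mem_erase.mpr ⟨Ne.symm h, Finset.mem_univ j⟩) hj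
  rw [hB]
  unfold Ecorr
  rcases eq_or_ne k j with h | h
  · subst h; simp only [eq_self_iff_true, if_true]; ring
  · simp only [if_neg h]; ring

lemma dunkl_equivariant {N : ℕ} (β : ℝ) {j k : Fin N} (hjk : j ≠ k)
    (f : (Fin N → ℝ) → ℝ) (x : Fin N → ℝ) :
    Dunkl β j f (x ∘ ⇑(Equiv.swap j k))
      = Dunkl β k (fun y => f (y ∘ ⇑(Equiv.swap j k))) x := by
  set σ := Equiv.swap j k with hσ
  unfold Dunkl
  congr 1
  · unfold pd
    have hpt : (x ∘ ⇑σ) j = x k := by simp [hσ, Equiv.swap_apply_left]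
    have hfun : ∀ t, Function.update (x ∘ ⇑σ) j t = (Function.update x k t) ∘ ⇑σ := by
      intro t; funext i
      rcases eq_or_ne i j with h | h
      · subst h
        simp only [Function.update_self, Function.comp_apply]
        rw [show σ i = k from Equiv.swap_apply_left i k, Function.update_self]
      · have hσi : σ i ≠ k := by
          intro hc
          exact h (σ.injective (by rw [hc, hσ, Equiv.swap_apply_left]))
        simp [Function.update_of_ne h, Function.update_of_ne hσi]
    rw [hpt]
    congr 1
    funext t
    rw [hfun t]
  · congr 1
    refine Finset.sum_equiv σ (fun i => ?_) (fun i hi => ?_)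
    · simp only [Finset.mem_erase, Finset.mem_univ, and_true]
      constructor
      · intro h hc
        exact h (σ.injective (by rw [hc, hσ, Equiv.swap_apply_left]))
      · intro h hc; subst hc; exact h (by simp [hσ, Equiv.swap_apply_left])
    · have hd1 : (x ∘ ⇑σ) j = x k := by simp [hσ, Equiv.swap_apply_left]
      have hd2 : (x ∘ ⇑σ) i = x (σ i) := rfl
      have hnum : (x ∘ ⇑σ) ∘ ⇑(Equiv.swap j i) = (x ∘ ⇑(Equiv.swap k (σ i))) ∘ ⇑σ := by
        funext m
        have : Equiv.swap k (σ i) (σ m) = σ (Equiv.swap j i m) := by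
          have hk : k = σ j := by simp [hσ, Equiv.swap_apply_left]
          rw [hk, Equiv.swap_apply_apply]
          simp [Equiv.Perm.mul_apply]
        simp only [Function.comp_apply, this]
      rw [hd1, hd2, hnum]

lemma ecorr_differentiableAt {N : ℕ} (β : ℝ) (j k : Fin N) {f : (Fin N → ℝ) → ℝ}
    (hf : ContDiff ℝ (⊤ : ℕ∞) f) (x : Fin N → ℝ) :
    DifferentiableAt ℝ (Ecorr β j k f) x := by
  unfold Ecorr
  rcases eq_or_ne k j with h | h
  · simp only [if_pos h]
    exact (((hf.differentiable (by simp)) x)).add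
      ((DifferentiableAt.fun_sum (fun l _ =>
        ((contDiff_comp_perm hf (Equiv.swap j l)).differentiable (by simp)) x)).const_mul β)
  · simp only [if_neg h]
    exact ((((contDiff_comp_perm hf (Equiv.swap k j)).differentiable (by simp)) x).const_mul β).neg

/-- `[Δ, x_j] = 2 D_j`, i.e. `Δ(x_j · f) − x_j · Δ f = 2 D_j f`
(on smooth functions, away from the diagonals). -/
theorem delta_comm_mul {N : ℕ} (β : ℝ) (f : (Fin N → ℝ) → ℝ)
    (hf : ContDiff ℝ (⊤ : ℕ∞) f) (j : Fin N) (x : Fin N → ℝ)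
    (hx : Function.Injective x) :
    DeltaOp β (fun y => y j * f y) x - x j * DeltaOp β f x = 2 * Dunkl β j f x := by
  have hfd : Differentiable ℝ f := hf.differentiable (by simp)
  set U : Set (Fin N → ℝ) := {y | Function.Injective y} with hUdef
  have hU : IsOpen U := isOpen_inj
  have hxU : x ∈ U := hx
  have hswU : ∀ k l : Fin N, (x ∘ ⇑(Equiv.swap k l)) ∈ U :=
    fun k l => hx.comp (Equiv.injective _)
  -- the key pointwise identity for each k
  have key : ∀ k : Fin N, Dunkl β k (Dunkl β k (fun y => y j * f y)) x
      = x j * Dunkl β k (Dunkl β k f) x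
        + (Ecorr β j k (Dunkl β k f) x + Dunkl β k (Ecorr β j k f) x) := by
    intro k
    have hDk : DifferentiableAt ℝ (Dunkl β k f) x := dunkl_differentiableAt β k hf hx
    have step2 : Dunkl β k (Dunkl β k (fun y => y j * f y)) x
        = Dunkl β k (fun y => y j * Dunkl β k f y + Ecorr β j k f y) x := by
      refine Dunkl_congr β k hU (fun y hy => ?_) hxU (fun l => hswU k l)
      exact dunkl_mul β j k (hfd y) hy
    have hprod : DifferentiableAt ℝ (fun y : Fin N → ℝ => y j * Dunkl β k f y) x :=
      ((differentiable_apply j) x).mul hDk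
    have hE : DifferentiableAt ℝ (Ecorr β j k f) x := ecorr_differentiableAt β j k hf x
    have step3 : Dunkl β k (fun y => y j * Dunkl β k f y + Ecorr β j k f y) x
        = Dunkl β k (fun y => y j * Dunkl β k f y) x + Dunkl β k (Ecorr β j k f) x :=
      Dunkl_add β k hprod hE
    have step4 : Dunkl β k (fun y => y j * Dunkl β k f y) x
        = x j * Dunkl β k (Dunkl β k f) x + Ecorr β j k (Dunkl β k f) x :=
      dunkl_mul β j k hDk hx
    rw [step2, step3, step4]
    ring
  -- reduce to the sum of corrections
  have hsplit : DeltaOp β (fun y => y j * f y) x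
      = x j * DeltaOp β f x
        + ∑ k, (Ecorr β j k (Dunkl β k f) x + Dunkl β k (Ecorr β j k f) x) := by
    unfold DeltaOp
    rw [Finset.sum_congr rfl (fun k _ => key k), Finset.sum_add_distrib, ← Finset.mul_sum]
  rw [hsplit, add_sub_cancel_left]
  -- compute the diagonal term
  have hAj : Ecorr β j j (Dunkl β j f) x + Dunkl β j (Ecorr β j j f) x
      = 2 * Dunkl β j f x + ∑ k ∈ univ.erase j,
          β * (Dunkl β j f (x ∘ ⇑(Equiv.swap j k))
            + Dunkl β j (fun y => f (y ∘ ⇑(Equiv.swap j k))) x) := by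
    have h1 : Ecorr β j j (Dunkl β j f) x
        = Dunkl β j f x + β * ∑ l ∈ univ.erase j, Dunkl β j f (x ∘ ⇑(Equiv.swap j l)) := by
      unfold Ecorr; rw [if_pos rfl]
    have he : Ecorr β j j f
        = fun y => f y + β * ∑ l ∈ univ.erase j, f (y ∘ ⇑(Equiv.swap j l)) := by
      funext y; unfold Ecorr; rw [if_pos rfl]
    have hdiffsum : DifferentiableAt ℝ
        (fun y : Fin N → ℝ => β * ∑ l ∈ univ.erase j, f (y ∘ ⇑(Equiv.swap j l))) x :=
      (DifferentiableAt.fun_sum (fun l _ =>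
        ((contDiff_comp_perm hf (Equiv.swap j l)).differentiable (by simp)) x)).const_mul β
    have h2 : Dunkl β j (Ecorr β j j f) x
        = Dunkl β j f x + β * ∑ l ∈ univ.erase j,
            Dunkl β j (fun y => f (y ∘ ⇑(Equiv.swap j l))) x := by
      rw [he, Dunkl_add β j (hfd x) hdiffsum,
        Dunkl_const_mul β j β (fun y => ∑ l ∈ univ.erase j, f (y ∘ ⇑(Equiv.swap j l))) x,
        Dunkl_sum β j (univ.erase j) (fun l y => f (y ∘ ⇑(Equiv.swap j l)))
          (fun l _ => ((contDiff_comp_perm hf (Equiv.swap j l)).differentiable (by simp)) x)]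
    rw [h1, h2, Finset.mul_sum, Finset.mul_sum,
      Finset.sum_congr rfl (fun l _ => mul_add β (Dunkl β j f (x ∘ ⇑(Equiv.swap j l)))
        (Dunkl β j (fun y => f (y ∘ ⇑(Equiv.swap j l))) x)),
      Finset.sum_add_distrib]
    ring
  -- split the sum at k = j and cancel the off-diagonal contributions
  rw [← Finset.add_sum_erase univ _ (Finset.mem_univ j), hAj, add_assoc,
    ← Finset.sum_add_distrib]
  have hzero : ∀ k ∈ univ.erase j,
      β * (Dunkl β j f (x ∘ ⇑(Equiv.swap j k))
          + Dunkl β j (fun y => f (y ∘ ⇑(Equiv.swap j k))) x)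
        + (Ecorr β j k (Dunkl β k f) x + Dunkl β k (Ecorr β j k f) x) = 0 := by
    intro k hk
    have hkj : k ≠ j := (Finset.mem_erase.mp hk).1
    have h1 : Ecorr β j k (Dunkl β k f) x
        = -(β * Dunkl β k f (x ∘ ⇑(Equiv.swap k j))) := by
      unfold Ecorr; rw [if_neg hkj]
    have he : Ecorr β j k f = fun y => (-β) * f (y ∘ ⇑(Equiv.swap k j)) := by
      funext y; unfold Ecorr; rw [if_neg hkj]; ring
    have h2 : Dunkl β k (Ecorr β j k f) x
        = (-β) * Dunkl β k (fun y => f (y ∘ ⇑(Equiv.swap k j))) x := by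
      rw [he, Dunkl_const_mul β k (-β) (fun y => f (y ∘ ⇑(Equiv.swap k j))) x]
    have h3 : Dunkl β k f (x ∘ ⇑(Equiv.swap k j))
        = Dunkl β j (fun y => f (y ∘ ⇑(Equiv.swap k j))) x :=
      dunkl_equivariant β hkj f x
    have h4 : Dunkl β j f (x ∘ ⇑(Equiv.swap j k))
        = Dunkl β k (fun y => f (y ∘ ⇑(Equiv.swap j k))) x :=
      dunkl_equivariant β (Ne.symm hkj) f x
    have h5 : Equiv.swap j k = Equiv.swap k j := Equiv.swap_comm j k
    rw [h1, h2, h3, h4, h5]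
    ring
  rw [Finset.sum_congr rfl hzero, Finset.sum_const_zero, add_zero]
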